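/- In the structure R₂, ≤_i-successorship is closed under suprema for i ∈ {1,2}: if S is a nonempty set of ordinals and α ≤_i β for every β ∈ S, then α ≤_i sup S. -/

import Mathlib

open Ordinal

noncomputable section

/-- The least epsilon number: the least fixed point of `ξ ↦ ω ^ ξ`. -/
def eps0 : Ordinal := sInf {ξ : Ordinal | Ordinal.omega0 ^ ξ = ξ}

namespace R2

/-- Terms of the language `{≤, ≤₁, ≤₂}`: existentially quantified variables,
universally quantified variables, and parameters (ordinal constants). -/
inductive Trm : Type 1 where
  | evar : ℕ → Trm
  | avar : ℕ → Trm
  | cst  : Ordinal → Trm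

def Trm.val (v w : ℕ → Ordinal) : Trm → Ordinal
  | .evar n => v n
  | .avar n => w n
  | .cst c  => c

/-- Quantifier-free formulas in the language `{≤, ≤₁, ≤₂}`. -/
inductive QF : Type 1 where
  | le  : Trm → Trm → QF
  | le1 : Trm → Trm → QF
  | le2 : Trm → Trm → QF
  | not : QF → QF
  | and : QF → QF → QF
  | or  : QF → QF → QF

def QF.eval (r1 r2 : Ordinal → Ordinal → Prop) (v w : ℕ → Ordinal) : QF → Prop
  | .le s t  => s.val v w ≤ t.val v w
  | .le1 s t => r1 (s.val v w) (t.val v w)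
  | .le2 s t => r2 (s.val v w) (t.val v w)
  | .not φ   => ¬ φ.eval r1 r2 v w
  | .and φ ψ => φ.eval r1 r2 v w ∧ ψ.eval r1 r2 v w
  | .or φ ψ  => φ.eval r1 r2 v w ∨ ψ.eval r1 r2 v w

def Trm.NoAvar : Trm → Prop
  | .avar _ => False
  | _ => True

def QF.NoAvar : QF → Prop
  | .le s t  => s.NoAvar ∧ t.NoAvar
  | .le1 s t => s.NoAvar ∧ t.NoAvar
  | .le2 s t => s.NoAvar ∧ t.NoAvar
  | .not φ   => φ.NoAvar
  | .and φ ψ => φ.NoAvar ∧ ψ.NoAvar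
  | .or φ ψ  => φ.NoAvar ∧ ψ.NoAvar

def Trm.CstBelow (δ : Ordinal) : Trm → Prop
  | .cst c => c < δ
  | _ => True

def QF.CstBelow (δ : Ordinal) : QF → Prop
  | .le s t  => s.CstBelow δ ∧ t.CstBelow δ
  | .le1 s t => s.CstBelow δ ∧ t.CstBelow δ
  | .le2 s t => s.CstBelow δ ∧ t.CstBelow δ
  | .not φ   => φ.CstBelow δ
  | .and φ ψ => φ.CstBelow δ ∧ ψ.CstBelow δ
  | .or φ ψ  => φ.CstBelow δ ∧ ψ.CstBelow δ

/-- Satisfaction of a Σ₁-formula (an existential block in front of a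
quantifier-free formula without universal variables) in the segment of
ordinals `< δ`, with the indicated interpretations of `≤₁` and `≤₂`. -/
def Sat1 (r1 r2 : Ordinal → Ordinal → Prop) (δ : Ordinal) (φ : QF) : Prop :=
  ∃ v : ℕ → Ordinal, (∀ n, v n < δ) ∧ φ.eval r1 r2 v v

/-- Satisfaction of a Σ₂-formula (a block of existential quantifiers followed
by a block of universal quantifiers in front of a quantifier-free formula) in
the segment of ordinals `< δ`. -/
def Sat2 (r1 r2 : Ordinal → Ordinal → Prop) (δ : Ordinal) (φ : QF) : Prop :=
  ∃ v : ℕ → Ordinal, (∀ n, v n < δ) ∧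
    ∀ w : ℕ → Ordinal, (∀ n, w n < δ) → φ.eval r1 r2 v w

/-- `(α; ≤, ≤₁, ≤₂)` is a Σ₁-elementary substructure of `(β; ≤, ≤₁, ≤₂)`:
Σ₁-sentences with parameters `< α` hold in `α` iff they hold in `β`. -/
def Sig1Elem (r1 r2 : Ordinal → Ordinal → Prop) (α β : Ordinal) : Prop :=
  ∀ φ : QF, φ.NoAvar → φ.CstBelow α → (Sat1 r1 r2 α φ ↔ Sat1 r1 r2 β φ)

/-- `(α; ≤, ≤₁, ≤₂)` is a Σ₂-elementary substructure of `(β; ≤, ≤₁, ≤₂)`. -/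
def Sig2Elem (r1 r2 : Ordinal → Ordinal → Prop) (α β : Ordinal) : Prop :=
  ∀ φ : QF, φ.CstBelow α → (Sat2 r1 r2 α φ ↔ Sat2 r1 r2 β φ)

/-- The simultaneous recursive (in `β`) definition of `α ≤₁ β` (`i = false`)
and `α ≤₂ β` (`i = true`): `α ≤ᵢ β` iff `α ≤ β` and `(α; ≤, ≤₁, ≤₂)` is a
Σᵢ-elementary substructure of `(β; ≤, ≤₁, ≤₂)`, where the relations `≤₁, ≤₂`
are the restrictions to the segment below `β`, already defined by recursion. -/
noncomputable def leAux : Ordinal → Bool → Ordinal → Prop :=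
  WellFounded.fix Ordinal.lt_wf fun β IH i α =>
    α ≤ β ∧
      (match i with
        | false => Sig1Elem
        | true  => Sig2Elem)
        (fun x y => ∃ h : y < β, IH y h false x)
        (fun x y => ∃ h : y < β, IH y h true x) α β

/-- `α ≤₁ β` in the structure `R₂`. -/
def le1 (α β : Ordinal) : Prop := leAux β false α

/-- `α ≤₂ β` in the structure `R₂`. -/
def le2 (α β : Ordinal) : Prop := leAux β true α

def lt1 (α β : Ordinal) : Prop := le1 α β ∧ α < β

def lt2 (α β : Ordinal) : Prop := le2 α β ∧ α < β

/-- `h` is an isomorphism (w.r.t. `≤, ≤₁, ≤₂`) on the set `A`. -/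
def IsoOn (h : Ordinal → Ordinal) (A : Set Ordinal) : Prop :=
  ∀ x ∈ A, ∀ y ∈ A,
    (x ≤ y ↔ h x ≤ h y) ∧ (le1 x y ↔ le1 (h x) (h y)) ∧ (le2 x y ↔ le2 (h x) (h y))

end R2


/-!
Put `δ = sup S`. A Σ-formula mentions only finitely many variables, so every assignment below `δ`
may be replaced by one bounded by some `γ < δ`, and `S` contains a `β > γ`. For `≤₁` this pulls a
Σ₁-witness below `δ` down to one below some `β ∈ S`, and then below `α`. For `≤₂` the existential
part of a Σ₂-formula true below `α` is fixed by substituting its witnesses as parameters (they are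
`< α`); the resulting Π₁-formula holds below every `β ∈ S`, hence below `δ`. Throughout, `≤₁, ≤₂`
restricted below `β ≤ δ` agree with their restrictions below `δ` on the relevant arguments.
-/

namespace R2

def Trm.varBound : Trm → ℕ
  | .evar n => n + 1
  | .avar n => n + 1
  | .cst _ => 0

def QF.varBound : QF → ℕ
  | .le s t => max s.varBound t.varBound
  | .le1 s t => max s.varBound t.varBound
  | .le2 s t => max s.varBound t.varBound
  | .not φ => φ.varBound
  | .and φ ψ => max φ.varBound ψ.varBound
  | .or φ ψ => max φ.varBound ψ.varBound

theorem Trm.val_congr {v v' w w' : ℕ → Ordinal} :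
    ∀ t : Trm, (∀ n < t.varBound, v n = v' n) → (∀ n < t.varBound, w n = w' n) →
      t.val v w = t.val v' w'
  | .evar n, hv, _ => hv n n.lt_succ_self
  | .avar n, _, hw => hw n n.lt_succ_self
  | .cst _, _, _ => rfl

theorem QF.eval_congr {r1 r2 : Ordinal → Ordinal → Prop} {v v' w w' : ℕ → Ordinal} (φ : QF)
    (hv : ∀ n < φ.varBound, v n = v' n) (hw : ∀ n < φ.varBound, w n = w' n) :
    φ.eval r1 r2 v w ↔ φ.eval r1 r2 v' w' := by
  induction φ with
  | le s t | le1 s t | le2 s t =>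
    simp only [QF.varBound, lt_max_iff] at hv hw
    simp only [QF.eval, Trm.val_congr s (fun n h => hv n (.inl h)) (fun n h => hw n (.inl h)),
      Trm.val_congr t (fun n h => hv n (.inr h)) (fun n h => hw n (.inr h))]
  | not φ ih => simp only [QF.eval, ih hv hw]
  | and φ ψ ih₁ ih₂ | or φ ψ ih₁ ih₂ =>
    simp only [QF.varBound, lt_max_iff] at hv hw
    simp only [QF.eval, ih₁ (fun n h => hv n (.inl h)) (fun n h => hw n (.inl h)),
      ih₂ (fun n h => hv n (.inr h)) (fun n h => hw n (.inr h))]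

theorem exists_bounded_eqOn_lt {δ : Ordinal} {v : ℕ → Ordinal} (hv : ∀ n, v n < δ) (N : ℕ) :
    ∃ γ < δ, ∃ v' : ℕ → Ordinal, (∀ n, v' n ≤ γ) ∧ ∀ n < N, v' n = v n := by
  have hδ : ⊥ < δ := bot_le.trans_lt (hv 0)
  refine ⟨(Finset.range N).sup v, (Finset.sup_lt_iff hδ).2 fun n _ => hv n,
    fun n => if n < N then v n else 0, fun n => ?_, fun n hn => if_pos hn⟩
  dsimp only
  split_ifs with hn
  · exact Finset.le_sup (Finset.mem_range.2 hn)
  · exact zero_le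

theorem Trm.val_lt {v w : ℕ → Ordinal} {δ : Ordinal} (hv : ∀ n, v n < δ) (hw : ∀ n, w n < δ) :
    ∀ t : Trm, t.CstBelow δ → t.val v w < δ
  | .evar n, _ => hv n
  | .avar n, _ => hw n
  | .cst _, h => h

theorem QF.eval_congr_rel {r1 r2 r1' r2' : Ordinal → Ordinal → Prop} {δ : Ordinal}
    {v w : ℕ → Ordinal}
    (h1 : ∀ x y, y < δ → (r1 x y ↔ r1' x y)) (h2 : ∀ x y, y < δ → (r2 x y ↔ r2' x y))
    (hv : ∀ n, v n < δ) (hw : ∀ n, w n < δ) (φ : QF) (hφ : φ.CstBelow δ) :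
    φ.eval r1 r2 v w ↔ φ.eval r1' r2' v w := by
  induction φ with
  | le s t => rfl
  | le1 s t => exact h1 _ _ (Trm.val_lt hv hw t hφ.2)
  | le2 s t => exact h2 _ _ (Trm.val_lt hv hw t hφ.2)
  | not φ ih => simp only [QF.eval, ih hφ]
  | and φ ψ ih₁ ih₂ | or φ ψ ih₁ ih₂ => simp only [QF.eval, ih₁ hφ.1, ih₂ hφ.2]

theorem Trm.CstBelow.mono {δ δ' : Ordinal} (h : δ ≤ δ') :
    ∀ t : Trm, t.CstBelow δ → t.CstBelow δ'
  | .evar _, _ => trivial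
  | .avar _, _ => trivial
  | .cst _, hc => hc.trans_le h

theorem QF.CstBelow.mono {δ δ' : Ordinal} (h : δ ≤ δ') :
    ∀ φ : QF, φ.CstBelow δ → φ.CstBelow δ'
  | .le s t, hc | .le1 s t, hc | .le2 s t, hc =>
    ⟨Trm.CstBelow.mono h s hc.1, Trm.CstBelow.mono h t hc.2⟩
  | .not φ, hc => QF.CstBelow.mono h φ hc
  | .and φ ψ, hc | .or φ ψ, hc => ⟨QF.CstBelow.mono h φ hc.1, QF.CstBelow.mono h ψ hc.2⟩

def Trm.substE (v : ℕ → Ordinal) : Trm → Trm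
  | .evar n => .cst (v n)
  | .avar n => .avar n
  | .cst c => .cst c

def QF.substE (v : ℕ → Ordinal) : QF → QF
  | .le s t => .le (s.substE v) (t.substE v)
  | .le1 s t => .le1 (s.substE v) (t.substE v)
  | .le2 s t => .le2 (s.substE v) (t.substE v)
  | .not φ => .not (φ.substE v)
  | .and φ ψ => .and (φ.substE v) (ψ.substE v)
  | .or φ ψ => .or (φ.substE v) (ψ.substE v)

theorem Trm.val_substE (v v' w : ℕ → Ordinal) : ∀ t : Trm, (t.substE v).val v' w = t.val v w
  | .evar _ | .avar _ | .cst _ => rfl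

theorem QF.eval_substE (r1 r2 : Ordinal → Ordinal → Prop) (v v' w : ℕ → Ordinal) (φ : QF) :
    (φ.substE v).eval r1 r2 v' w ↔ φ.eval r1 r2 v w := by
  induction φ with
  | le s t | le1 s t | le2 s t => simp only [QF.substE, QF.eval, Trm.val_substE]
  | not φ ih => simp only [QF.substE, QF.eval, ih]
  | and φ ψ ih₁ ih₂ | or φ ψ ih₁ ih₂ => simp only [QF.substE, QF.eval, ih₁, ih₂]

theorem Trm.cstBelow_substE {δ : Ordinal} {v : ℕ → Ordinal} (hv : ∀ n, v n < δ) :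
    ∀ t : Trm, t.CstBelow δ → (t.substE v).CstBelow δ
  | .evar n, _ => hv n
  | .avar _, h | .cst _, h => h

theorem QF.cstBelow_substE {δ : Ordinal} {v : ℕ → Ordinal} (hv : ∀ n, v n < δ) :
    ∀ φ : QF, φ.CstBelow δ → (φ.substE v).CstBelow δ
  | .le s t, hc | .le1 s t, hc | .le2 s t, hc =>
    ⟨Trm.cstBelow_substE hv s hc.1, Trm.cstBelow_substE hv t hc.2⟩
  | .not φ, hc => QF.cstBelow_substE hv φ hc
  | .and φ ψ, hc | .or φ ψ, hc => ⟨QF.cstBelow_substE hv φ hc.1, QF.cstBelow_substE hv ψ hc.2⟩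

section Elementarity

variable {r1 r2 : Ordinal → Ordinal → Prop} {α β δ : Ordinal}

theorem Sat1.mono {φ : QF} (hαδ : α ≤ δ) : Sat1 r1 r2 α φ → Sat1 r1 r2 δ φ
  | ⟨v, hv, he⟩ => ⟨v, fun n => (hv n).trans_le hαδ, he⟩

theorem Sat1.exists_lt {φ : QF} (h : Sat1 r1 r2 δ φ) :
    ∃ γ < δ, ∀ β, γ < β → Sat1 r1 r2 β φ := by
  obtain ⟨v, hv, he⟩ := h
  obtain ⟨γ, hγ, v', hv'γ, hv'⟩ := exists_bounded_eqOn_lt hv φ.varBound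
  refine ⟨γ, hγ, fun β hγβ => ⟨v', fun n => (hv'γ n).trans_lt hγβ, ?_⟩⟩
  exact (φ.eval_congr (fun n hn => (hv' n hn).symm) (fun n hn => (hv' n hn).symm)).1 he

theorem Sat2.exists_lt {φ : QF} (h : Sat2 r1 r2 δ φ) :
    ∃ γ < δ, ∀ β, γ < β → β ≤ δ → Sat2 r1 r2 β φ := by
  obtain ⟨v, hv, he⟩ := h
  obtain ⟨γ, hγ, v', hv'γ, hv'⟩ := exists_bounded_eqOn_lt hv φ.varBound
  refine ⟨γ, hγ, fun β hγβ hβδ => ⟨v', fun n => (hv'γ n).trans_lt hγβ, fun w hw => ?_⟩⟩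
  exact (φ.eval_congr (fun n hn => (hv' n hn).symm) fun _ _ => rfl).1
    (he w fun n => (hw n).trans_le hβδ)

theorem QF.eval_of_cofinal {φ : QF} {v : ℕ → Ordinal}
    (h : ∀ γ < δ, ∃ β, γ < β ∧ ∀ w, (∀ n, w n < β) → φ.eval r1 r2 v w)
    (w : ℕ → Ordinal) (hw : ∀ n, w n < δ) : φ.eval r1 r2 v w := by
  obtain ⟨γ, hγ, w', hw'γ, hw'⟩ := exists_bounded_eqOn_lt hw φ.varBound
  obtain ⟨β, hγβ, hβ⟩ := h γ hγ
  exact (φ.eval_congr (fun _ _ => rfl) hw').1 (hβ w' fun n => (hw'γ n).trans_lt hγβ)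

theorem sig1Elem_of_cofinal (hαδ : α ≤ δ)
    (h : ∀ γ < δ, ∃ β, γ < β ∧ Sig1Elem r1 r2 α β) : Sig1Elem r1 r2 α δ := by
  refine fun φ hφ hφα => ⟨Sat1.mono hαδ, fun hδ => ?_⟩
  obtain ⟨γ, hγ, hsat⟩ := hδ.exists_lt
  obtain ⟨β, hγβ, hαβ⟩ := h γ hγ
  exact (hαβ φ hφ hφα).2 (hsat β hγβ)

theorem sig2Elem_of_cofinal (hαδ : α ≤ δ)
    (h : ∀ γ < δ, ∃ β, γ < β ∧ β ≤ δ ∧ Sig2Elem r1 r2 α β) : Sig2Elem r1 r2 α δ := by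
  refine fun φ hφα => ⟨fun ⟨v, hv, he⟩ => ?_, fun hδ => ?_⟩
  · -- substituting the witnesses `v` turns `φ` into a Π₁-formula with parameters below `α`
    refine ⟨v, fun n => (hv n).trans_le hαδ, QF.eval_of_cofinal fun γ hγ => ?_⟩
    obtain ⟨β, hγβ, -, hαβ⟩ := h γ hγ
    have hsat : Sat2 r1 r2 α (φ.substE v) :=
      ⟨v, hv, fun w hw => (φ.eval_substE r1 r2 v v w).2 (he w hw)⟩
    obtain ⟨u, -, hu⟩ := (hαβ _ (QF.cstBelow_substE hv φ hφα)).1 hsat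
    exact ⟨β, hγβ, fun w hw => (φ.eval_substE r1 r2 v u w).1 (hu w hw)⟩
  · obtain ⟨γ, hγ, hsat⟩ := hδ.exists_lt
    obtain ⟨β, hγβ, hβδ, hαβ⟩ := h γ hγ
    exact (hαβ φ hφα).2 (hsat β hγβ hβδ)

theorem sat1_congr_rel {r1' r2' : Ordinal → Ordinal → Prop} {φ : QF}
    (h1 : ∀ x y, y < δ → (r1 x y ↔ r1' x y)) (h2 : ∀ x y, y < δ → (r2 x y ↔ r2' x y))
    (hφ : φ.CstBelow δ) : Sat1 r1 r2 δ φ ↔ Sat1 r1' r2' δ φ :=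
  exists_congr fun _ => and_congr_right fun hv => φ.eval_congr_rel h1 h2 hv hv hφ

theorem sat2_congr_rel {r1' r2' : Ordinal → Ordinal → Prop} {φ : QF}
    (h1 : ∀ x y, y < δ → (r1 x y ↔ r1' x y)) (h2 : ∀ x y, y < δ → (r2 x y ↔ r2' x y))
    (hφ : φ.CstBelow δ) : Sat2 r1 r2 δ φ ↔ Sat2 r1' r2' δ φ :=
  exists_congr fun _ => and_congr_right fun hv => forall_congr' fun _ => forall_congr' fun hw =>
    φ.eval_congr_rel h1 h2 hv hw hφ

theorem sig1Elem_congr_rel {r1' r2' : Ordinal → Ordinal → Prop} (hαβ : α ≤ β)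
    (h1 : ∀ x y, y < β → (r1 x y ↔ r1' x y)) (h2 : ∀ x y, y < β → (r2 x y ↔ r2' x y)) :
    Sig1Elem r1 r2 α β ↔ Sig1Elem r1' r2' α β := by
  refine forall_congr' fun φ => imp_congr_right fun _ => forall_congr' fun hφ => ?_
  rw [sat1_congr_rel (fun x y hy => h1 x y (hy.trans_le hαβ))
      (fun x y hy => h2 x y (hy.trans_le hαβ)) hφ,
    sat1_congr_rel h1 h2 (hφ.mono hαβ φ)]

theorem sig2Elem_congr_rel {r1' r2' : Ordinal → Ordinal → Prop} (hαβ : α ≤ β)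
    (h1 : ∀ x y, y < β → (r1 x y ↔ r1' x y)) (h2 : ∀ x y, y < β → (r2 x y ↔ r2' x y)) :
    Sig2Elem r1 r2 α β ↔ Sig2Elem r1' r2' α β := by
  refine forall_congr' fun φ => forall_congr' fun hφ => ?_
  rw [sat2_congr_rel (fun x y hy => h1 x y (hy.trans_le hαβ))
      (fun x y hy => h2 x y (hy.trans_le hαβ)) hφ,
    sat2_congr_rel h1 h2 (hφ.mono hαβ φ)]

end Elementarity

/-- The restriction below `β` in the form used by the recursion defining `leAux`. -/
def restrictLT (β : Ordinal) (r : Ordinal → Ordinal → Prop) (x y : Ordinal) : Prop :=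
  ∃ _ : y < β, r x y

theorem restrictLT_congr {β δ x y : Ordinal} {r : Ordinal → Ordinal → Prop} (hβ : y < β)
    (hδ : y < δ) : restrictLT β r x y ↔ restrictLT δ r x y :=
  ⟨fun ⟨_, h⟩ => ⟨hδ, h⟩, fun ⟨_, h⟩ => ⟨hβ, h⟩⟩

theorem leAux_eq (β : Ordinal) :
    leAux β = fun i α => α ≤ β ∧ (match i with | false => Sig1Elem | true => Sig2Elem)
      (restrictLT β le1) (restrictLT β le2) α β := by
  unfold leAux
  rw [WellFounded.fix_eq]
  rfl

theorem le1_iff_of_le {α β δ : Ordinal} (hβδ : β ≤ δ) :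
    le1 α β ↔ α ≤ β ∧ Sig1Elem (restrictLT δ le1) (restrictLT δ le2) α β := by
  rw [le1, leAux_eq]
  exact and_congr_right fun hαβ => sig1Elem_congr_rel hαβ
    (fun _ _ hy => restrictLT_congr hy (hy.trans_le hβδ))
    (fun _ _ hy => restrictLT_congr hy (hy.trans_le hβδ))

theorem le2_iff_of_le {α β δ : Ordinal} (hβδ : β ≤ δ) :
    le2 α β ↔ α ≤ β ∧ Sig2Elem (restrictLT δ le1) (restrictLT δ le2) α β := by
  rw [le2, leAux_eq]
  exact and_congr_right fun hαβ => sig2Elem_congr_rel hαβ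
    (fun _ _ hy => restrictLT_congr hy (hy.trans_le hβδ))
    (fun _ _ hy => restrictLT_congr hy (hy.trans_le hβδ))

theorem le1_of_cofinal {α δ : Ordinal} (hαδ : α ≤ δ)
    (h : ∀ γ < δ, ∃ β, γ < β ∧ β ≤ δ ∧ le1 α β) : le1 α δ := by
  refine (le1_iff_of_le le_rfl).2 ⟨hαδ, sig1Elem_of_cofinal hαδ fun γ hγ => ?_⟩
  obtain ⟨β, hγβ, hβδ, hαβ⟩ := h γ hγ
  exact ⟨β, hγβ, ((le1_iff_of_le hβδ).1 hαβ).2⟩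

theorem le2_of_cofinal {α δ : Ordinal} (hαδ : α ≤ δ)
    (h : ∀ γ < δ, ∃ β, γ < β ∧ β ≤ δ ∧ le2 α β) : le2 α δ := by
  refine (le2_iff_of_le le_rfl).2 ⟨hαδ, sig2Elem_of_cofinal hαδ fun γ hγ => ?_⟩
  obtain ⟨β, hγβ, hβδ, hαβ⟩ := h γ hγ
  exact ⟨β, hγβ, hβδ, ((le2_iff_of_le hβδ).1 hαβ).2⟩

end R2

/-- In `R₂`, `≤ᵢ`-successorship is closed under suprema for `i = 1, 2`. -/
theorem leI_closed_under_sup (α : Ordinal) (S : Set Ordinal)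
    (hS : S.Nonempty) (hbd : BddAbove S) :
    ((∀ β ∈ S, R2.le1 α β) → R2.le1 α (sSup S)) ∧
    ((∀ β ∈ S, R2.le2 α β) → R2.le2 α (sSup S)) := by
  have cofinal : ∀ {P : Ordinal → Prop}, (∀ β ∈ S, P β) →
      ∀ γ < sSup S, ∃ β, γ < β ∧ β ≤ sSup S ∧ P β := fun hP γ hγ => by
    obtain ⟨β, hβ, hγβ⟩ := exists_lt_of_lt_csSup hS hγ
    exact ⟨β, hγβ, le_csSup hbd hβ, hP β hβ⟩
  obtain ⟨β₀, hβ₀⟩ := hS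
  refine ⟨fun h => R2.le1_of_cofinal ?_ (cofinal h), fun h => R2.le2_of_cofinal ?_ (cofinal h)⟩
  · exact ((R2.le1_iff_of_le le_rfl).1 (h β₀ hβ₀)).1.trans (le_csSup hbd hβ₀)
  · exact ((R2.le2_iff_of_le le_rfl).1 (h β₀ hβ₀)).1.trans (le_csSup hbd hβ₀)

end
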